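/- arXiv:1401.2759 — 3 statements merged into one kernel-verified Lean document; each statement's English description precedes it below -/
import Mathlib

section
/- For 0 < q < 1, r ≥ 1, n ≥ 0, and real x, the higher-order q-Euler polynomials satisfy E_{n,q}^{(r)}(x) = Σ_{l=0}^{n} C(n,l) q^{l x} E_{l,q}^{(r)} · [x]_q^{n-l}, where E_{l,q}^{(r)} = E_{l,q}^{(r)}(0). -/
noncomputable def qNum (q x : ℝ) : ℝ := (1 - q ^ x) / (1 - q)

/-- Closed form of the higher-order `q`-Euler polynomial. -/
noncomputable def qEuler (q : ℝ) (r n : ℕ) (x : ℝ) : ℝ :=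
  (1 / (1 - q)) ^ n *
    ∑ l ∈ Finset.range (n + 1),
      (n.choose l : ℝ) * (-1) ^ l * q ^ ((l : ℝ) * x) * (2 / (1 + q ^ l)) ^ r

/-! With `Q = q ^ x` we have `q ^ (l x) = Q ^ l` and `[x]_q = (1 - Q) / (1 - q)`, so up to the
factor `(1 - q) ^ (-n)` the right-hand side averages the binomial transforms
`∑ j, C(l, j) a j` of `a j = (-1) ^ j (2 / (1 + q ^ j)) ^ r` against the binomial weights
`C(n, l) Q ^ l (1 - Q) ^ (n - l)`. Since `C(n, l) C(l, j) = C(n, j) C(n - j, l - j)`, the binomial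
theorem collapses this average to `∑ j, C(n, j) Q ^ j a j`, which is the left-hand side. -/

open Finset

section BinomialTransform

variable {R : Type*} [CommRing R]

theorem sum_choose_mul_choose_mul_pow_mul_one_sub_pow (n j : ℕ) (Q : R) :
    ∑ l ∈ range (n + 1), (n.choose l * l.choose j : R) * Q ^ l * (1 - Q) ^ (n - l) =
      n.choose j * Q ^ j := by
  rcases lt_or_ge n j with hnj | hjn
  · rw [Nat.choose_eq_zero_of_lt hnj, Nat.cast_zero, zero_mul]
    refine sum_eq_zero fun l hl => ?_
    rw [Nat.choose_eq_zero_of_lt (n := l) (k := j) (by grind), Nat.cast_zero, mul_zero,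
      zero_mul, zero_mul]
  obtain ⟨m, rfl⟩ := Nat.exists_eq_add_of_le hjn
  have below_j : ∑ l ∈ range j,
      ((j + m).choose l * l.choose j : R) * Q ^ l * (1 - Q) ^ (j + m - l) = 0 :=
    sum_eq_zero fun l hl => by
      rw [Nat.choose_eq_zero_of_lt (mem_range.mp hl), Nat.cast_zero, mul_zero, zero_mul,
        zero_mul]
  have from_j : ∀ i ∈ range (m + 1),
      ((j + m).choose (j + i) * (j + i).choose j : R) * Q ^ (j + i) * (1 - Q) ^ (j + m - (j + i)) =
        (j + m).choose j * Q ^ j * (Q ^ i * (1 - Q) ^ (m - i) * m.choose i) := fun i _ => by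
    have h := Nat.choose_mul (n := j + m) (k := j + i) (Nat.le_add_right j i)
    simp only [Nat.add_sub_cancel_left] at h
    rw [← Nat.cast_mul, h, Nat.cast_mul, Nat.add_sub_add_left, pow_add]
    ring
  rw [add_assoc, sum_range_add, below_j, zero_add, sum_congr rfl from_j, ← mul_sum, ← add_pow,
    add_sub_cancel, one_pow, mul_one]

theorem sum_binomial_weight_mul_sum_choose (n : ℕ) (Q : R) (a : ℕ → R) :
    ∑ l ∈ range (n + 1), (n.choose l : R) * Q ^ l * (1 - Q) ^ (n - l) *
        ∑ j ∈ range (l + 1), (l.choose j : R) * a j =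
      ∑ j ∈ range (n + 1), (n.choose j : R) * Q ^ j * a j := by
  have extend : ∀ l ∈ range (n + 1), ∑ j ∈ range (l + 1), (l.choose j : R) * a j =
      ∑ j ∈ range (n + 1), (l.choose j : R) * a j := fun l hl =>
    sum_subset (range_subset_range.mpr (by grind)) fun j _ hj => by
      rw [Nat.choose_eq_zero_of_lt (by grind), Nat.cast_zero, zero_mul]
  rw [sum_congr rfl fun l hl => congrArg _ (extend l hl)]
  simp_rw [mul_sum]
  rw [sum_comm]
  refine sum_congr rfl fun j _ => ?_
  rw [← sum_choose_mul_choose_mul_pow_mul_one_sub_pow n j Q, sum_mul]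
  exact sum_congr rfl fun l _ => by ring

end BinomialTransform

theorem qEuler_eq_sum_rpow_pow {q : ℝ} (hq : 0 ≤ q) (r n : ℕ) (x : ℝ) :
    qEuler q r n x = (1 / (1 - q)) ^ n *
      ∑ l ∈ range (n + 1), (n.choose l : ℝ) * (q ^ x) ^ l * ((-1) ^ l * (2 / (1 + q ^ l)) ^ r) := by
  rw [qEuler]
  congr 1
  refine sum_congr rfl fun l _ => ?_
  rw [mul_comm (l : ℝ), Real.rpow_mul hq, Real.rpow_natCast]
  ring

theorem qNum_eq (q x : ℝ) : qNum q x = 1 / (1 - q) * (1 - q ^ x) := by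
  rw [qNum, one_div_mul_eq_div]

theorem qEuler_expansion_general (q : ℝ) (hq0 : 0 < q)
    (r : ℕ) (n : ℕ) (x : ℝ) :
    qEuler q r n x =
      ∑ l ∈ Finset.range (n + 1),
        (n.choose l : ℝ) * q ^ ((l : ℝ) * x) * qEuler q r l 0 * qNum q x ^ (n - l) := by
  set c := 1 / (1 - q)
  set a : ℕ → ℝ := fun l => (-1) ^ l * (2 / (1 + q ^ l)) ^ r
  have at_zero : ∀ l, qEuler q r l 0 = c ^ l * ∑ j ∈ range (l + 1), (l.choose j : ℝ) * a j := by
    intro l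
    simp only [qEuler_eq_sum_rpow_pow hq0.le, Real.rpow_zero, one_pow, mul_one]
    rfl
  rw [qEuler_eq_sum_rpow_pow hq0.le, ← sum_binomial_weight_mul_sum_choose, mul_sum]
  refine sum_congr rfl fun l hl => ?_
  rw [at_zero, qNum_eq, mul_comm (l : ℝ), Real.rpow_mul hq0.le, Real.rpow_natCast, mul_pow,
    ← pow_mul_pow_sub c (Nat.lt_succ_iff.mp (mem_range.mp hl))]
  ring

theorem qEuler_expansion (q : ℝ) (hq0 : 0 < q) (hq1 : q < 1)
    (r : ℕ) (hr : 1 ≤ r) (n : ℕ) (x : ℝ) :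
    qEuler q r n x =
      ∑ l ∈ Finset.range (n + 1),
        (n.choose l : ℝ) * q ^ ((l : ℝ) * x) * qEuler q r l 0 * qNum q x ^ (n - l) :=
  qEuler_expansion_general q hq0 r n x
end

section
/- Let 0 < q < 1, r ≥ 1, n ≥ 0, and let w₁, w₂ be odd positive integers. Then [w₁]_q^n · Σ_{j₁,…,j_r = 0}^{w₁ - 1} (-1)^{j₁+⋯+j_r} E_{n, q^{w₁}}^{(r)}( w₂ x + (w₂/w₁)(j₁+⋯+j_r) ) = [w₂]_q^n · Σ_{j₁,…,j_r = 0}^{w₂ - 1} (-1)^{j₁+⋯+j_r} E_{n, q^{w₂}}^{(r)}( w₁ x + (w₁/w₂)(j₁+⋯+j_r) ). -/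
open Finset

lemma Odd.geom_sum_neg {K : Type*} [Field K] {a : K} (ha : 1 + a ≠ 0) {w : ℕ} (hw : Odd w) :
    ∑ j ∈ range w, (-a) ^ j = (1 + a ^ w) / (1 + a) := by
  have hne : -a ≠ 1 := fun h => ha (by rw [← h]; ring)
  rw [geom_sum_eq hne, hw.neg_pow, div_eq_div_iff (sub_ne_zero.mpr hne) ha]
  ring

lemma sum_piFinset_pow_sum {R ι : Type*} [CommSemiring R] [Fintype ι] [DecidableEq ι]
    (s : Finset ℕ) (x : R) :
    ∑ j ∈ Fintype.piFinset (fun _ : ι => s), x ^ (∑ i, j i) =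
      (∑ k ∈ s, x ^ k) ^ Fintype.card ι := by
  simp_rw [← prod_pow_eq_pow_sum, sum_prod_piFinset, prod_const, card_univ]

lemma rpow_pow_mul_add_div_mul {q : ℝ} (hq : 0 < q) {w₁ : ℕ} (hw₁ : w₁ ≠ 0)
    (w₂ l s : ℕ) (x : ℝ) :
    (q ^ w₁) ^ ((l : ℝ) * (w₂ * x + (w₂ / w₁) * s)) =
      q ^ ((w₁ : ℝ) * w₂ * l * x) * (q ^ (w₂ * l)) ^ s := by
  rw [← Real.rpow_natCast q w₁, ← pow_mul, ← Real.rpow_natCast q (w₂ * l * s),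
    ← Real.rpow_mul hq.le, ← Real.rpow_add hq]
  congr 1
  push_cast
  field_simp

lemma sum_piFinset_neg_one_pow_mul_rpow (q : ℝ) (hq : 0 < q) (r : ℕ) {w₁ : ℕ} (hw₁ : Odd w₁)
    (w₂ l : ℕ) (x : ℝ) :
    ∑ j ∈ Fintype.piFinset (fun _ : Fin r => range w₁),
        (-1 : ℝ) ^ (∑ i, j i) * (q ^ w₁) ^ ((l : ℝ) * (w₂ * x + (w₂ / w₁) * ∑ i, (j i : ℝ))) =
      q ^ ((w₁ : ℝ) * w₂ * l * x) * ((1 + q ^ (w₁ * w₂ * l)) / (1 + q ^ (w₂ * l))) ^ r := by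
  have hterm : ∀ j : Fin r → ℕ,
      (-1 : ℝ) ^ (∑ i, j i) * (q ^ w₁) ^ ((l : ℝ) * (w₂ * x + (w₂ / w₁) * ∑ i, (j i : ℝ))) =
        q ^ ((w₁ : ℝ) * w₂ * l * x) * (-q ^ (w₂ * l)) ^ (∑ i, j i) := by
    intro j
    rw [← Nat.cast_sum, rpow_pow_mul_add_div_mul hq hw₁.pos.ne', neg_pow]
    ring
  have hgeom := hw₁.geom_sum_neg (a := q ^ (w₂ * l)) (by positivity)
  rw [sum_congr rfl fun j _ => hterm j, ← mul_sum, sum_piFinset_pow_sum, hgeom,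
    Fintype.card_fin, ← pow_mul, show w₂ * l * w₁ = w₁ * w₂ * l by ring]

lemma qNum_pow_mul_sum_qEuler (q : ℝ) (hq0 : 0 < q) (hq1 : q < 1) (r n : ℕ)
    {w₁ : ℕ} (hw₁ : Odd w₁) (w₂ : ℕ) (x : ℝ) :
    qNum q (w₁ : ℝ) ^ n *
        ∑ j ∈ Fintype.piFinset fun _ : Fin r => range w₁,
          (-1 : ℝ) ^ (∑ l, j l) *
            qEuler (q ^ w₁) r n ((w₂ : ℝ) * x + ((w₂ : ℝ) / w₁) * ∑ l, (j l : ℝ)) =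
      (1 / (1 - q)) ^ n * ∑ l ∈ range (n + 1),
        (n.choose l : ℝ) * (-1) ^ l * q ^ ((w₁ : ℝ) * w₂ * l * x) *
          (2 * (1 + q ^ (w₁ * w₂ * l)) / ((1 + q ^ (w₁ * l)) * (1 + q ^ (w₂ * l)))) ^ r := by
  have hqw : 1 - q ^ w₁ ≠ 0 := (sub_pos.mpr (pow_lt_one₀ hq0.le hq1 hw₁.pos.ne')).ne'
  have hprefactor : ((1 - q ^ w₁) / (1 - q)) ^ n * (1 / (1 - q ^ w₁)) ^ n = (1 / (1 - q)) ^ n := by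
    rw [← mul_pow]
    congr 1
    field_simp
  calc _ = (1 / (1 - q)) ^ n * ∑ l ∈ range (n + 1),
          (n.choose l : ℝ) * (-1) ^ l * (2 / (1 + q ^ (w₁ * l))) ^ r *
            ∑ j ∈ Fintype.piFinset fun _ : Fin r => range w₁, (-1 : ℝ) ^ (∑ i, j i) *
              (q ^ w₁) ^ ((l : ℝ) * (w₂ * x + (w₂ / w₁) * ∑ i, (j i : ℝ))) := by
        simp only [qEuler, qNum, Real.rpow_natCast, ← pow_mul, ← Nat.cast_sum, mul_sum]
        rw [sum_comm]
        refine sum_congr rfl fun l _ => sum_congr rfl fun j _ => ?_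
        linear_combination ((-1 : ℝ) ^ (∑ i, j i) * (n.choose l : ℝ) * (-1) ^ l *
          (q ^ w₁) ^ ((l : ℝ) * (w₂ * x + (w₂ / w₁) * ((∑ i, j i : ℕ) : ℝ))) *
          (2 / (1 + q ^ (w₁ * l))) ^ r) * hprefactor
    _ = _ := by
        refine congrArg _ (sum_congr rfl fun l _ => ?_)
        rw [sum_piFinset_neg_one_pow_mul_rpow q hq0 r hw₁, mul_div_mul_comm, mul_pow]
        ring

theorem qEuler_symmetry_general (q : ℝ) (hq0 : 0 < q) (hq1 : q < 1)
    (r : ℕ) (n : ℕ) (w₁ w₂ : ℕ) (hw₁ : Odd w₁) (hw₂ : Odd w₂)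
    (x : ℝ) :
    qNum q (w₁ : ℝ) ^ n *
        ∑ j ∈ Fintype.piFinset fun _ : Fin r => Finset.range w₁,
          (-1 : ℝ) ^ (∑ l, j l) *
            qEuler (q ^ w₁) r n ((w₂ : ℝ) * x + ((w₂ : ℝ) / w₁) * ∑ l, (j l : ℝ)) =
      qNum q (w₂ : ℝ) ^ n *
        ∑ j ∈ Fintype.piFinset fun _ : Fin r => Finset.range w₂,
          (-1 : ℝ) ^ (∑ l, j l) *
            qEuler (q ^ w₂) r n ((w₁ : ℝ) * x + ((w₁ : ℝ) / w₂) * ∑ l, (j l : ℝ)) := by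
  rw [qNum_pow_mul_sum_qEuler q hq0 hq1 r n hw₁ w₂ x,
    qNum_pow_mul_sum_qEuler q hq0 hq1 r n hw₂ w₁ x]
  refine congrArg _ (sum_congr rfl fun l _ => ?_)
  rw [mul_comm (w₂ : ℝ) w₁, Nat.mul_comm w₂ w₁, mul_comm (1 + q ^ (w₂ * l))]

theorem qEuler_symmetry (q : ℝ) (hq0 : 0 < q) (hq1 : q < 1)
    (r : ℕ) (hr : 1 ≤ r) (n : ℕ) (w₁ w₂ : ℕ) (hw₁ : Odd w₁) (hw₂ : Odd w₂)
    (hw₁0 : 0 < w₁) (hw₂0 : 0 < w₂) (x : ℝ) :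
    qNum q (w₁ : ℝ) ^ n *
        ∑ j ∈ Fintype.piFinset fun _ : Fin r => Finset.range w₁,
          (-1 : ℝ) ^ (∑ l, j l) *
            qEuler (q ^ w₁) r n ((w₂ : ℝ) * x + ((w₂ : ℝ) / w₁) * ∑ l, (j l : ℝ)) =
      qNum q (w₂ : ℝ) ^ n *
        ∑ j ∈ Fintype.piFinset fun _ : Fin r => Finset.range w₂,
          (-1 : ℝ) ^ (∑ l, j l) *
            qEuler (q ^ w₂) r n ((w₁ : ℝ) * x + ((w₁ : ℝ) / w₂) * ∑ l, (j l : ℝ)) :=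
  qEuler_symmetry_general q hq0 hq1 r n w₁ w₂ hw₁ hw₂ x
end

section
/- For 0 < q < 1, r ≥ 1, n ≥ 0, odd positive integers w₁, w₂, integers j₁,…,j_r with 0 ≤ j_l < w₁, and real x, the following 'splitting' identity holds: [w₁]_q^n · E_{n, q^{w₁}}^{(r)}( w₂ x + (w₂/w₁) Σ_{l=1}^r j_l ) = Σ_{i=0}^{n} C(n,i) [w₂]_q^{i} [w₁]_q^{n-i} [Σ_{l=1}^r j_l]_{q^{w₂}}^{i} · q^{w₂ (n-i) Σ_{l=1}^r j_l} · E_{n-i, q^{w₁}}^{(r)}(w₂ x). -/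
/-!
Put `Q = q ^ w₁`, `S = ∑ l, j l` and `A = q ^ (w₂ S)`. After the factor `[w₁]_q ^ m / (1 - Q) ^ m =
(1 - q) ^ (-m)` is absorbed, every `q`-Euler value involved is a signed binomial transform
`∑ l, C(m, l) (-1) ^ l B l` of one sequence `B l = Q ^ (l w₂ x) (2 / (1 + Q ^ l)) ^ r`; the shift of the
argument by `(w₂ / w₁) S` only replaces `B l` by `A ^ l B l`, and `[w₂]_q [S]_{q ^ w₂} = (1 - A) / (1 - q)`.
What remains is `(1 - A X) ^ n = ((1 - A) + A (1 - X)) ^ n` expanded by the binomial theorem and read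
through the linear functional `X ^ l ↦ B l`.
-/

open Polynomial

section BinomialTransform

variable {R : Type*} [CommRing R]

def binomialTransform (B : ℕ → R) (m : ℕ) : R :=
  ∑ l ∈ Finset.range (m + 1), (m.choose l : R) * (-1) ^ l * B l

def umbralEval (B : ℕ → R) : R[X] →ₗ[R] R :=
  lsum fun l => (LinearMap.id : R →ₗ[R] R).smulRight (B l)

lemma umbralEval_C_mul_X_pow (B : ℕ → R) (a : R) (l : ℕ) :
    umbralEval B (C a * X ^ l) = a * B l := by
  simp [umbralEval, C_mul_X_pow_eq_monomial, lsum_apply, sum_monomial_index]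

lemma umbralEval_one_sub_C_mul_X_pow (B : ℕ → R) (a : R) (m : ℕ) :
    umbralEval B ((1 - C a * X) ^ m) = binomialTransform (fun l => a ^ l * B l) m := by
  rw [sub_eq_neg_add, ← neg_mul, ← C_neg, add_pow, map_sum, binomialTransform]
  refine Finset.sum_congr rfl fun l _ => ?_
  rw [one_pow, mul_one, mul_pow, ← C_pow, ← Nat.cast_comm, ← C_eq_natCast, ← mul_assoc, ← C_mul,
    umbralEval_C_mul_X_pow, neg_pow]
  ring

lemma binomialTransform_eq_umbralEval (B : ℕ → R) (m : ℕ) :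
    binomialTransform B m = umbralEval B ((1 - X) ^ m) := by
  simpa using (umbralEval_one_sub_C_mul_X_pow B 1 m).symm

lemma binomialTransform_pow_mul (B : ℕ → R) (A : R) (n : ℕ) :
    binomialTransform (fun l => A ^ l * B l) n =
      ∑ i ∈ Finset.range (n + 1),
        (n.choose i : R) * (1 - A) ^ i * A ^ (n - i) * binomialTransform B (n - i) := by
  have hsplit : 1 - C A * X = C (1 - A) + C A * (1 - X) := by
    rw [C_sub, C_1]; ring
  rw [← umbralEval_one_sub_C_mul_X_pow, hsplit, add_pow, map_sum]
  refine Finset.sum_congr rfl fun i _ => ?_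
  have hterm : C (1 - A) ^ i * (C A * (1 - X)) ^ (n - i) * (n.choose i : R[X]) =
      C ((n.choose i : R) * (1 - A) ^ i * A ^ (n - i)) * (1 - X) ^ (n - i) := by
    simp only [map_mul, map_pow, map_natCast, mul_pow]; ring
  rw [hterm, C_mul', map_smul, smul_eq_mul, binomialTransform_eq_umbralEval]

end BinomialTransform

lemma qNum_natCast (q : ℝ) (w : ℕ) : qNum q w = (1 - q ^ w) / (1 - q) := by
  rw [qNum, Real.rpow_natCast]

lemma qNum_mul_qNum_pow {q : ℝ} (hq : 0 ≤ q) (w : ℕ) (z : ℝ) :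
    qNum q w * qNum (q ^ w) z = qNum q (w * z) := by
  have hpow : (q ^ w) ^ z = q ^ ((w : ℝ) * z) := by
    rw [← Real.rpow_natCast, ← Real.rpow_mul hq]
  by_cases h : q ^ w = 1
  · simp [qNum, h, ← hpow]
  · rw [qNum_natCast, qNum, qNum, hpow, div_mul_div_comm, mul_comm (1 - q),
      mul_div_mul_left _ _ (sub_ne_zero.2 (Ne.symm h))]

noncomputable def qEulerTerm (Q : ℝ) (r : ℕ) (y : ℝ) (l : ℕ) : ℝ :=
  Q ^ ((l : ℝ) * y) * (2 / (1 + Q ^ l)) ^ r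

lemma qEuler_eq_binomialTransform (Q : ℝ) (r n : ℕ) (y : ℝ) :
    qEuler Q r n y = (1 / (1 - Q)) ^ n * binomialTransform (qEulerTerm Q r y) n := by
  simp only [qEuler, binomialTransform, qEulerTerm, mul_assoc]

lemma qEulerTerm_add {Q : ℝ} (hQ : 0 < Q) (r : ℕ) (y z : ℝ) (l : ℕ) :
    qEulerTerm Q r (y + z) l = (Q ^ z) ^ l * qEulerTerm Q r y l := by
  rw [qEulerTerm, qEulerTerm, mul_add, Real.rpow_add hQ, ← Real.rpow_natCast (Q ^ z),
    ← Real.rpow_mul hQ.le, mul_comm z]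
  ring

lemma qNum_pow_mul_qEuler {q : ℝ} {w : ℕ} (hq : q ^ w ≠ 1) (r m : ℕ) (y : ℝ) :
    qNum q w ^ m * qEuler (q ^ w) r m y =
      (1 / (1 - q)) ^ m * binomialTransform (qEulerTerm (q ^ w) r y) m := by
  rw [qEuler_eq_binomialTransform, qNum_natCast, ← mul_assoc, ← mul_pow, div_mul_div_comm,
    mul_one, mul_comm (1 - q), div_mul_cancel_left₀ (sub_ne_zero.2 (Ne.symm hq)), one_div]

theorem qEuler_splitting_general (q : ℝ) (hq0 : 0 < q) (hq1 : q < 1)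
    (r : ℕ) (n : ℕ) (w₁ w₂ : ℕ)
    (hw₁0 : 0 < w₁) (j : Fin r → ℕ) (x : ℝ) :
    qNum q (w₁ : ℝ) ^ n *
        qEuler (q ^ w₁) r n ((w₂ : ℝ) * x + ((w₂ : ℝ) / w₁) * ∑ l, (j l : ℝ)) =
      ∑ i ∈ Finset.range (n + 1),
        (n.choose i : ℝ) * qNum q (w₂ : ℝ) ^ i * qNum q (w₁ : ℝ) ^ (n - i) *
          qNum (q ^ w₂) ((∑ l, j l : ℕ) : ℝ) ^ i *
          q ^ ((w₂ * (n - i) * ∑ l, j l : ℕ)) *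
          qEuler (q ^ w₁) r (n - i) ((w₂ : ℝ) * x) := by
  set S := ∑ l, j l
  set A := q ^ (w₂ * S) with hA
  have hQ : q ^ w₁ ≠ 1 := (pow_lt_one₀ hq0.le hq1 hw₁0.ne').ne
  have hshift : (q ^ w₁) ^ ((w₂ : ℝ) / w₁ * ∑ l, (j l : ℝ)) = A := by
    rw [hA, ← Real.rpow_natCast, ← Real.rpow_mul hq0.le, ← Real.rpow_natCast, ← mul_assoc,
      mul_div_cancel₀ _ (by positivity)]
    push_cast [S]
    rfl
  have hqNumA : qNum q w₂ * qNum (q ^ w₂) S = (1 - A) / (1 - q) := by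
    rw [qNum_mul_qNum_pow hq0.le, ← Nat.cast_mul, qNum_natCast]
  have hterm : qEulerTerm (q ^ w₁) r (w₂ * x + w₂ / w₁ * ∑ l, (j l : ℝ)) =
      fun l => A ^ l * qEulerTerm (q ^ w₁) r (w₂ * x) l :=
    funext fun l => by rw [qEulerTerm_add (pow_pos hq0 _), hshift]
  rw [qNum_pow_mul_qEuler hQ, hterm, binomialTransform_pow_mul, Finset.mul_sum]
  refine Finset.sum_congr rfl fun i hi => ?_
  obtain ⟨k, rfl⟩ := Nat.exists_eq_add_of_le (Finset.mem_range_succ_iff.1 hi)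
  rw [Nat.add_sub_cancel_left]
  have hqA : q ^ (w₂ * k * S) = A ^ k := by rw [hA, ← pow_mul]; ring_nf
  calc _ = ((i + k).choose i : ℝ) * ((1 - A) / (1 - q)) ^ i * A ^ k *
        ((1 / (1 - q)) ^ k * binomialTransform (qEulerTerm (q ^ w₁) r (w₂ * x)) k) := by
        rw [pow_add, div_eq_mul_one_div (1 - A), mul_pow]; ring
    _ = _ := by
      rw [← hqNumA, ← qNum_pow_mul_qEuler hQ, hqA]; ring

theorem qEuler_splitting (q : ℝ) (hq0 : 0 < q) (hq1 : q < 1)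
    (r : ℕ) (hr : 1 ≤ r) (n : ℕ) (w₁ w₂ : ℕ) (hw₁ : Odd w₁) (hw₂ : Odd w₂)
    (hw₁0 : 0 < w₁) (hw₂0 : 0 < w₂) (j : Fin r → ℕ) (hj : ∀ l, j l < w₁) (x : ℝ) :
    qNum q (w₁ : ℝ) ^ n *
        qEuler (q ^ w₁) r n ((w₂ : ℝ) * x + ((w₂ : ℝ) / w₁) * ∑ l, (j l : ℝ)) =
      ∑ i ∈ Finset.range (n + 1),
        (n.choose i : ℝ) * qNum q (w₂ : ℝ) ^ i * qNum q (w₁ : ℝ) ^ (n - i) *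
          qNum (q ^ w₂) ((∑ l, j l : ℕ) : ℝ) ^ i *
          q ^ ((w₂ * (n - i) * ∑ l, j l : ℕ)) *
          qEuler (q ^ w₁) r (n - i) ((w₂ : ℝ) * x) :=
  qEuler_splitting_general q hq0 hq1 r n w₁ w₂ hw₁0 j x
end
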